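/- Let F : ℝ → [0,∞) be continuous and monotonically nonincreasing, let w : (0,∞) → (0,∞) be continuous and monotonically nonincreasing, and let α > 0, r ≥ 0, t ≥ 0, λ⁰ ≥ 0, A ≥ 0 and B > 0. Assume u·F(α·u + r·t) → 0 as u → ∞, and assume that if A = 0 then F(α·w(x) + r·t) → 0 as x → 0⁺. Then the function x ↦ (x／(A + x))·λ⁰·F(α·w(x + A) + r·t)·(t + w(x + A)) is bounded on (0, B]. -/
import Mathlib


open Filter

/-- Let `F : ℝ → [0,∞)` be continuous and monotonically nonincreasing,
`w : (0,∞) → (0,∞)` continuous and monotonically nonincreasing, and `α > 0`, `r ≥ 0`,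
`t ≥ 0`, `λ⁰ ≥ 0`, `A ≥ 0`, `B > 0`. Assume `u·F(α·u + r·t) → 0` as `u → ∞`, and that if
`A = 0` then `F(α·w(x) + r·t) → 0` as `x → 0⁺`.  Then the busy-hours contribution
`x ↦ (x/(A+x)) · λ⁰ · F(α·w(x+A) + r·t) · (t + w(x+A))` is bounded on `(0, B]`. -/
theorem busy_hours_bounded
    (F : ℝ → ℝ) (hF0 : ∀ c, 0 ≤ F c) (hFcont : Continuous F) (hFanti : Antitone F)
    (w : ℝ → ℝ) (hwcont : ContinuousOn w (Set.Ioi 0))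
    (hwpos : ∀ x, 0 < x → 0 < w x) (hwanti : AntitoneOn w (Set.Ioi 0))
    (α r t lam0 A B : ℝ) (hα : 0 < α) (hr : 0 ≤ r) (ht : 0 ≤ t)
    (hlam0 : 0 ≤ lam0) (hA : 0 ≤ A) (hB : 0 < B)
    (htail : Tendsto (fun u : ℝ => u * F (α * u + r * t)) atTop (nhds 0))
    (hA0 : A = 0 → Tendsto (fun x : ℝ => F (α * w x + r * t))
        (nhdsWithin 0 (Set.Ioi 0)) (nhds 0)) :
    ∃ C : ℝ, ∀ x ∈ Set.Ioc 0 B,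
      |x / (A + x) * lam0 * F (α * w (x + A) + r * t) * (t + w (x + A))| ≤ C := by
  obtain ⟨M, hM⟩ := Metric.tendsto_atTop.mp htail 1 one_pos
  set M' := max M 1 with hM'def
  refine ⟨lam0 * (t * F (r * t) + max 1 (M' * F (r * t))), ?_⟩
  rintro x ⟨hx0, hxB⟩
  have hxA : 0 < x + A := by linarith
  set u := w (x + A) with hu
  have hupos : 0 < u := hwpos _ hxA
  have hfrac : x / (A + x) ≤ 1 := div_le_one_of_le₀ (by linarith) (by linarith)
  have hfrac0 : 0 ≤ x / (A + x) := by positivity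
  have hFle : F (α * u + r * t) ≤ F (r * t) :=
    hFanti (by nlinarith [hα.le, hupos.le])
  have hFnn := hF0 (α * u + r * t)
  have hFrtnn := hF0 (r * t)
  have hgu : u * F (α * u + r * t) ≤ max 1 (M' * F (r * t)) := by
    rcases le_total M' u with h | h
    · have h2 := hM u (le_trans (le_max_left M 1) h)
      rw [Real.dist_eq, sub_zero] at h2
      calc u * F (α * u + r * t) ≤ |u * F (α * u + r * t)| := le_abs_self _
        _ ≤ 1 := h2.le
        _ ≤ max 1 (M' * F (r * t)) := le_max_left _ _
    · refine le_trans ?_ (le_max_right _ _)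
      nlinarith
  have habs : |x / (A + x) * lam0 * F (α * u + r * t) * (t + u)|
      = x / (A + x) * lam0 * F (α * u + r * t) * (t + u) :=
    abs_of_nonneg (by positivity)
  rw [habs]
  have key : F (α * u + r * t) * (t + u) ≤ t * F (r * t) + max 1 (M' * F (r * t)) := by
    have heq : F (α * u + r * t) * (t + u)
        = t * F (α * u + r * t) + u * F (α * u + r * t) := by ring
    rw [heq]
    nlinarith
  have hFtu : 0 ≤ F (α * u + r * t) * (t + u) := by positivity
  calc x / (A + x) * lam0 * F (α * u + r * t) * (t + u)
      ≤ lam0 * (F (α * u + r * t) * (t + u)) := by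
        have hh := mul_le_mul_of_nonneg_right hfrac
          (show 0 ≤ lam0 * (F (α * u + r * t) * (t + u)) by positivity)
        nlinarith [hh]
    _ ≤ lam0 * (t * F (r * t) + max 1 (M' * F (r * t))) :=
        mul_le_mul_of_nonneg_left key hlam0
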